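/- arXiv:0909.1091 — 2 statements merged into one kernel-verified Lean document; each statement's English description precedes it below -/
import Mathlib

section
/- Let x and y be two points of a locally finite set ω ⊂ ℝ². Let S be the square having segment xy as a diagonal, and let T₁, T₂ be the two open triangles into which the diagonal xy divides S. If both T₁ and T₂ contain a point of ω in their interior, then the Voronoi cells of x and y (with respect to ω) are not adjacent, i.e., the intersection of the closures of the cells of x and y contains no point equidistant to x and y and closer to x, y than to all other points of ω. -/
/-!
Let `z` be equidistant from `x` and `y`, and let `c₊, c₋` be the two other corners of the square.
The diagonals `xy` and `c₊c₋` have the same midpoint and the same length, so by Apollonius'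
theorem `dist z c₊ ^ 2 + dist z c₋ ^ 2 = dist z x ^ 2 + dist z y ^ 2`; hence one of the corners,
say `c₊`, is no farther from `z` than `x` is. The whole triangle `x y c₊` then lies in the closed
ball about `z` through `x`, so its interior lies in the open ball, and the point of `ω` inside it
is strictly closer to `z` than `x`.
-/

open Set Metric

local notation "E" => EuclideanSpace ℝ (Fin 2)

noncomputable def rot90 (v : E) : E :=
  (WithLp.equiv 2 ((i : Fin 2) → ℝ)).symm ![-(v 1), v 0]

lemma norm_rot90 (v : E) : ‖rot90 v‖ = ‖v‖ := by
  simp only [EuclideanSpace.norm_eq, Fin.sum_univ_two, rot90, WithLp.equiv_symm_apply,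
    Matrix.cons_val_zero, Matrix.cons_val_one, Real.norm_eq_abs, sq_abs, neg_sq]
  rw [add_comm]

open EuclideanGeometry in
lemma dist_le_or_dist_le_of_midpoint_eq {V P : Type*} [NormedAddCommGroup V]
    [InnerProductSpace ℝ V] [MetricSpace P] [NormedAddTorsor V P] {x y c d z : P}
    (hmid : midpoint ℝ c d = midpoint ℝ x y) (hcd : dist c d ≤ dist x y)
    (hz : dist z x = dist z y) : dist z c ≤ dist z x ∨ dist z d ≤ dist z x := by
  by_contra! h
  have hxy := dist_sq_add_dist_sq_eq_two_mul_dist_midpoint_sq_add_half_dist_sq z x y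
  have hcd' := dist_sq_add_dist_sq_eq_two_mul_dist_midpoint_sq_add_half_dist_sq z c d
  rw [hmid] at hcd'
  have hc := pow_lt_pow_left₀ h.1 dist_nonneg two_ne_zero
  have hd := pow_lt_pow_left₀ h.2 dist_nonneg two_ne_zero
  have hhalf := pow_le_pow_left₀ (div_nonneg dist_nonneg zero_le_two)
    (div_le_div_of_nonneg_right hcd zero_le_two) 2
  rw [← hz] at hxy
  linarith

lemma interior_convexHull_subset_ball {F : Type*} [NormedAddCommGroup F] [NormedSpace ℝ F]
    [Nontrivial F] {s : Set F} {z : F} {r : ℝ} (hs : s ⊆ closedBall z r) :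
    interior (convexHull ℝ s) ⊆ ball z r :=
  interior_closedBall' z r ▸ interior_mono (convexHull_min hs (convex_closedBall z r))

lemma interior_convexHull_inter_eq_empty_of_dist_le {F : Type*} [NormedAddCommGroup F]
    [NormedSpace ℝ F] [Nontrivial F] {ω : Set F} {x y c z : F}
    (hz : dist z x = dist z y) (hc : dist z c ≤ dist z x)
    (hmin : ∀ w ∈ ω, w ≠ x → w ≠ y → dist z x < dist z w) :
    interior (convexHull ℝ {x, y, c}) ∩ ω = ∅ := by
  refine eq_empty_of_forall_notMem fun p ⟨hp, hpω⟩ => ?_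
  have hsub : ({x, y, c} : Set F) ⊆ closedBall z (dist z x) := by
    simp only [insert_subset_iff, singleton_subset_iff, mem_closedBall, dist_comm _ z]
    exact ⟨le_rfl, hz.ge, hc⟩
  have hpz : dist p z < dist z x := interior_convexHull_subset_ball hsub hp
  rw [dist_comm] at hpz
  have hpx : p ≠ x := by rintro rfl; exact hpz.false
  have hpy : p ≠ y := by rintro rfl; exact (hz ▸ hpz).false
  exact (hmin p hpω hpx hpy).not_ge hpz.le

theorem stmt_2_general (ω : Set E)
    (x y : E)
    (h₁ : (interior (convexHull ℝ
        {x, y, midpoint ℝ x y + (1/2 : ℝ) • rot90 (y - x)}) ∩ ω).Nonempty)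
    (h₂ : (interior (convexHull ℝ
        {x, y, midpoint ℝ x y - (1/2 : ℝ) • rot90 (y - x)}) ∩ ω).Nonempty) :
    ¬ ∃ z : E, dist z x = dist z y ∧ ∀ w ∈ ω, w ≠ x → w ≠ y → dist z x < dist z w := by
  rintro ⟨z, hz, hmin⟩
  set m := midpoint ℝ x y
  set u : E := (1/2 : ℝ) • rot90 (y - x)
  have hdiag : dist (m + u) (m - u) ≤ dist x y := by
    rw [dist_eq_norm, dist_comm, dist_eq_norm, add_sub_sub_cancel, ← two_smul ℝ u,
      smul_smul, norm_smul]
    norm_num [norm_rot90]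
  rcases dist_le_or_dist_le_of_midpoint_eq (midpoint_add_sub (R := ℝ) m u) hdiag hz with hc | hc
  · exact h₁.ne_empty (interior_convexHull_inter_eq_empty_of_dist_le hz hc hmin)
  · exact h₂.ne_empty (interior_convexHull_inter_eq_empty_of_dist_le hz hc hmin)

/-- The two open triangles into which the diagonal `xy` divides the square `S`
having segment `xy` as a diagonal: the other two corners of `S` are
`midpoint x y ± (1/2) • rot90 (y - x)`.  If both open triangles contain a point of the
locally finite set `ω`, then the Voronoi cells of `x` and `y` are not adjacent: no point is
equidistant to `x` and `y` and strictly closer to `x, y` than to every other point of `ω`. -/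
theorem stmt_2 (ω : Set E) (hloc : ∀ (p : E) (r : ℝ), (ω ∩ closedBall p r).Finite)
    (x y : E) (hx : x ∈ ω) (hy : y ∈ ω) (hxy : x ≠ y)
    (h₁ : (interior (convexHull ℝ
        {x, y, midpoint ℝ x y + (1/2 : ℝ) • rot90 (y - x)}) ∩ ω).Nonempty)
    (h₂ : (interior (convexHull ℝ
        {x, y, midpoint ℝ x y - (1/2 : ℝ) • rot90 (y - x)}) ∩ ω).Nonempty) :
    ¬ ∃ z : E, dist z x = dist z y ∧ ∀ w ∈ ω, w ≠ x → w ≠ y → dist z x < dist z w :=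
  stmt_2_general ω x y h₁ h₂
end

section
/- Let G be a planar graph and let (T, λ) be an even cycle exhaustion of G with corridors of width 4 (pairwise distances between cycles at least 4, each cycle non-selftouching of even length, interiors nested according to a one-ended tree T, and the complement of the union of cycles having only finite components). Suppose each finite contracted graph G_v is properly 4-colorable. Then G admits a proper 5-coloring. -/
/-!
The blocks `H_v = λ(v) ∪ int λ(v)` are coloured by well-founded induction on `T`: permute a
4-colouring of `G_v` so that `p_v(v)` gets a prescribed colour `α`, keep it on the ordinary
vertices, give one colour class of the even cycle `λ(v)` the colour `α` and the other the fifth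
colour, and colour the block of each child `w` recursively with the colour of `p_v(w)` in the role
of `α`. Distinct cycles are disjoint and not adjacent, so an edge between these parts is an edge
of `G_v`.

Interiors are finite components of `G - λ(v)`, so each finite component of `G` lies in every block
and child blocks are nested only along infinite components: the recursion is proper only on
infinite components, and the finite ones are coloured inside the block of a leaf of `T`, which has
no child blocks. A vertex of an infinite component lies in all blocks far enough up a ray of `T`,
and an ultrafilter limit of the block colourings along the ray is a proper colouring.
-/

open Set

variable {V ι : Type*}

/-- The subgraph induced by `S` is a (non-selftouching) cycle. -/
def IsInducedCycle (G : SimpleGraph V) (S : Set V) : Prop :=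
  S.Finite ∧ 3 ≤ S.ncard ∧
    (∀ x ∈ S, {y | y ∈ S ∧ G.Adj x y}.ncard = 2) ∧
    (G.induce S).Connected

/-- The sets `A` and `B` are at graph distance at least `n` in `G`. -/
def FarApart (G : SimpleGraph V) (A B : Set V) (n : ℕ) : Prop :=
  ∀ x ∈ A, ∀ y ∈ B, ∀ p : G.Walk x y, n ≤ p.length

/-- `y` is reachable from `x` by a walk avoiding the set `C`. -/
def ReachAvoiding (G : SimpleGraph V) (C : Set V) (x y : V) : Prop :=
  ∃ p : G.Walk x y, ∀ v ∈ p.support, v ∉ C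

/-- The interior of a cycle (vertex set `C`) of `G`: the vertices lying in finite
components of `G \ C`. -/
def interiorOf (G : SimpleGraph V) (C : Set V) : Set V :=
  {x | x ∉ C ∧ {y | ReachAvoiding G C x y}.Finite}

/-- `λ(w) ∪ int(λ(w))`, the block contracted to the vertex `p_v(w)` for a child `w`. -/
def blockOf (G : SimpleGraph V) (lamC : ι → Set V) (w : ι) : Set V :=
  lamC w ∪ interiorOf G (lamC w)

/-- The relation defining the contracted graph `G_v`: ordinary vertices keep the
adjacency of `G`; `λ(v)` is contracted to `Sum.inr v` and, for each child `u` of `v`,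
the block `H_u = λ(u) ∪ int(λ(u))` is contracted to `Sum.inr u`. -/
def contrRel (G : SimpleGraph V) (lamC : ι → Set V) (par : ι → ι) (v : ι) :
    V ⊕ ι → V ⊕ ι → Prop
  | Sum.inl x, Sum.inl y => G.Adj x y
  | Sum.inl x, Sum.inr u =>
      (u = v ∧ ∃ y ∈ lamC v, G.Adj x y) ∨
      (par u = v ∧ u ≠ v ∧ ∃ y ∈ blockOf G lamC u, G.Adj x y)
  | Sum.inr u, Sum.inl x =>
      (u = v ∧ ∃ y ∈ lamC v, G.Adj x y) ∨
      (par u = v ∧ u ≠ v ∧ ∃ y ∈ blockOf G lamC u, G.Adj x y)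
  | Sum.inr u, Sum.inr u' =>
      (u = v ∧ par u' = v ∧ u' ≠ v ∧
        ∃ x ∈ lamC v, ∃ y ∈ blockOf G lamC u', G.Adj x y) ∨
      (u' = v ∧ par u = v ∧ u ≠ v ∧
        ∃ x ∈ lamC v, ∃ y ∈ blockOf G lamC u, G.Adj x y) ∨
      (par u = v ∧ u ≠ v ∧ par u' = v ∧ u' ≠ v ∧ u ≠ u' ∧
        ∃ x ∈ blockOf G lamC u, ∃ y ∈ blockOf G lamC u', G.Adj x y)

/-- The ordinary vertices of `G_v`: vertices of `int(λ(v))` not on `λ(v)` and not in a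
contracted child block. -/
def ordinaryOf (G : SimpleGraph V) (lamC : ι → Set V) (par : ι → ι) (v : ι) : Set V :=
  interiorOf G (lamC v) \
    (lamC v ∪ ⋃ w ∈ {w | par w = v ∧ w ≠ v}, blockOf G lamC w)

/-- The vertex set of the contracted graph `G_v`. -/
def contrVerts (G : SimpleGraph V) (lamC : ι → Set V) (par : ι → ι) (v : ι) :
    Set (V ⊕ ι) :=
  Sum.inl '' ordinaryOf G lamC par v ∪ {Sum.inr v} ∪
    Sum.inr '' {w | par w = v ∧ w ≠ v}

/-- The finite contracted graph `G_v`. -/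
def contrGraph (G : SimpleGraph V) (lamC : ι → Set V) (par : ι → ι) (v : ι) :
    SimpleGraph (contrVerts G lamC par v) :=
  (SimpleGraph.fromRel (contrRel G lamC par v)).induce (contrVerts G lamC par v)


namespace SimpleGraph

variable {W : Type*} {G : SimpleGraph V} {A : SimpleGraph V} {B : SimpleGraph W}

theorem Reachable.mem_of_forall_adj_mem {S : Set V} {u v : V} (h : G.Reachable u v)
    (hS : ∀ a ∈ S, ∀ b, G.Adj a b → b ∈ S) (hu : u ∈ S) : v ∈ S :=
  h.mem_subgraphVerts (H := (⊤ : G.Subgraph).induce S)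
    (fun a ha b hab => ⟨ha, hS a ha b hab, hab⟩) hu

theorem Copy.exists_adj_eq_of_ncard_neighborSet_le (f : Copy A B) {i : V}
    (hfin : (B.neighborSet (f i)).Finite)
    (hdeg : (B.neighborSet (f i)).ncard ≤ (A.neighborSet i).ncard) {b : W}
    (h : B.Adj (f i) b) : ∃ j, A.Adj i j ∧ f j = b := by
  have himage : f '' A.neighborSet i = B.neighborSet (f i) := by
    refine Set.eq_of_subset_of_ncard_le ?_ ?_ hfin
    · rintro _ ⟨j, hj, rfl⟩
      exact f.toHom.map_adj hj
    · rwa [Set.ncard_image_of_injective (f := ⇑f) _ f.injective]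
  rw [← mem_neighborSet, ← himage] at h
  obtain ⟨j, hj, rfl⟩ := h
  exact ⟨j, hj, rfl⟩

theorem Copy.surjective_of_ncard_neighborSet_le [Nonempty V] (f : Copy A B) (hB : B.Connected)
    (hfin : ∀ i, (B.neighborSet (f i)).Finite)
    (hdeg : ∀ i, (B.neighborSet (f i)).ncard ≤ (A.neighborSet i).ncard) :
    Function.Surjective f := by
  obtain ⟨i⟩ := ‹Nonempty V›
  intro b
  refine (hB.preconnected (f i) b).mem_of_forall_adj_mem (S := Set.range f) ?_ ⟨i, rfl⟩
  rintro _ ⟨j, rfl⟩ b hb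
  obtain ⟨k, -, rfl⟩ := f.exists_adj_eq_of_ncard_neighborSet_le (hfin j) (hdeg j) hb
  exact ⟨k, rfl⟩

theorem ncard_neighborSet_cycleGraph {n : ℕ} (hn : 3 ≤ n) (i : Fin n) :
    ((cycleGraph n).neighborSet i).ncard = 2 := by
  obtain ⟨m, rfl⟩ := Nat.exists_eq_add_of_le' hn
  rw [Set.ncard_eq_toFinset_card', ← cycleGraph_degree_three_le (v := i),
    ← card_neighborFinset_eq_degree]
  rfl

theorem nonempty_coloring_of_eventually_ne {α : Type*} [Finite α] (c : ℕ → V → α)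
    (hc : ∀ x y, G.Adj x y → ∀ᶠ k in Filter.atTop, c k x ≠ c k y) :
    Nonempty (G.Coloring α) := by
  let U : Ultrafilter ℕ := Filter.hyperfilter ℕ
  have hU : ∀ {p : ℕ → Prop}, (∀ᶠ k in Filter.atTop, p k) → ∀ᶠ k in U, p k :=
    fun h => Filter.hyperfilter_le_cofinite (Nat.cofinite_eq_atTop ▸ h)
  have hlim : ∀ x, ∃ a, ∀ᶠ k in U, c k x = a := fun x => by
    obtain ⟨a, ha⟩ := (U.map (c · x)).eq_pure_of_finite
    exact ⟨a, show {a} ∈ U.map (c · x) from ha ▸ Filter.mem_pure.2 rfl⟩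
  choose c' hc' using hlim
  refine ⟨Coloring.mk c' fun {x y} hxy => ?_⟩
  obtain ⟨k, hkx, hky, hk⟩ := ((hc' x).and ((hc' y).and (hU (hc x y hxy)))).exists
  exact hkx ▸ hky ▸ hk

end SimpleGraph

open SimpleGraph

section Avoiding

variable {G : SimpleGraph V} {C D S : Set V} {x y z : V}

theorem ReachAvoiding.refl (hx : x ∉ C) : ReachAvoiding G C x x :=
  ⟨.nil, by simpa using hx⟩

theorem ReachAvoiding.symm (h : ReachAvoiding G C x y) : ReachAvoiding G C y x := by
  obtain ⟨p, hp⟩ := h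
  exact ⟨p.reverse, by simpa using hp⟩

theorem ReachAvoiding.trans (h : ReachAvoiding G C x y) (h' : ReachAvoiding G C y z) :
    ReachAvoiding G C x z := by
  obtain ⟨p, hp⟩ := h
  obtain ⟨q, hq⟩ := h'
  exact ⟨p.append q, fun v hv => (Walk.mem_support_append_iff _ _).1 hv |>.elim (hp v) (hq v)⟩

theorem ReachAvoiding.notMem_left (h : ReachAvoiding G C x y) : x ∉ C := by
  obtain ⟨p, hp⟩ := h
  exact hp x p.start_mem_support

theorem ReachAvoiding.notMem_right (h : ReachAvoiding G C x y) : y ∉ C :=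
  h.symm.notMem_left

theorem ReachAvoiding.mono (hDC : D ⊆ C) (h : ReachAvoiding G C x y) :
    ReachAvoiding G D x y := by
  obtain ⟨p, hp⟩ := h
  exact ⟨p, fun v hv hvD => hp v hv (hDC hvD)⟩

theorem ReachAvoiding.adj (h : ReachAvoiding G C x y) (hyz : G.Adj y z) (hz : z ∉ C) :
    ReachAvoiding G C x z :=
  h.trans ⟨hyz.toWalk, by simp [h.notMem_right, hz]⟩

theorem reachAvoiding_of_reachable (hx : x ∉ C)
    (hexit : ∀ r c, ReachAvoiding G C x r → G.Adj r c → c ∉ C) (h : G.Reachable x y) :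
    ReachAvoiding G C x y :=
  h.mem_of_forall_adj_mem (S := {y | ReachAvoiding G C x y})
    (fun r hr c hrc => hr.adj hrc (hexit r c hr hrc)) (.refl hx)

theorem mem_interiorOf_of_reachAvoiding (hx : x ∈ interiorOf G C)
    (h : ReachAvoiding G C x y) : y ∈ interiorOf G C :=
  ⟨h.notMem_right, hx.2.subset fun _ hz => h.trans hz⟩

theorem mem_interiorOf_of_adj (hx : x ∈ interiorOf G C) (hxy : G.Adj x y) (hy : y ∉ C) :
    y ∈ interiorOf G C :=
  mem_interiorOf_of_reachAvoiding hx ((ReachAvoiding.refl hx.1).adj hxy hy)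

theorem mem_interiorOf_of_finite_supp (hx : x ∉ C)
    (hfin : (G.connectedComponentMk x).supp.Finite) : x ∈ interiorOf G C :=
  ⟨hx, hfin.subset fun _ ⟨p, _⟩ => ConnectedComponent.eq.2 ⟨p.reverse⟩⟩

/-- A walk leaving the interior of `S` has to cross `S`. -/
theorem mem_interiorOf_of_mem_interiorOf (hS : S.Finite) (hSD : S ⊆ interiorOf G D)
    (hx : x ∈ interiorOf G S) (hxD : x ∉ D) : x ∈ interiorOf G D := by
  classical
  refine ⟨hxD, (hx.2.union (hS.biUnion fun z hz => (hSD hz).2)).subset ?_⟩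
  rintro y ⟨p, hp⟩
  by_cases hpS : ∃ w ∈ p.support, w ∈ S
  · obtain ⟨w, hw, hwS⟩ := hpS
    exact .inr (Set.mem_biUnion hwS
      ⟨p.dropUntil w hw, fun v hv => hp v (p.support_dropUntil_subset_support hw hv)⟩)
  · exact .inl ⟨p, fun v hv hvS => hpS ⟨v, hv, hvS⟩⟩

end Avoiding

section Cycles

variable {G : SimpleGraph V} {A B C S : Set V} {x y z : V} {n : ℕ}

theorem FarApart.mono {m : ℕ} (h : FarApart G A B n) (hmn : m ≤ n) : FarApart G A B m :=
  fun x hx y hy p => hmn.trans (h x hx y hy p)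

theorem FarApart.disjoint (h : FarApart G A B n) (hn : 0 < n) : Disjoint A B :=
  Set.disjoint_left.2 fun x hxA hxB => by simpa using (h x hxA x hxB .nil).trans_lt' hn

theorem FarApart.not_adj (h : FarApart G A B n) (hn : 1 < n) (hx : x ∈ A) (hy : y ∈ B) :
    ¬ G.Adj x y := fun hxy => by simpa using (h x hx y hy hxy.toWalk).trans_lt' hn

theorem IsInducedCycle.reachAvoiding (hS : IsInducedCycle G S) (hSC : Disjoint S C)
    (hx : x ∈ S) (hy : y ∈ S) : ReachAvoiding G C x y := by
  obtain ⟨p⟩ := hS.2.2.2 ⟨x, hx⟩ ⟨y, hy⟩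
  refine ⟨p.map (Embedding.induce S).toHom, fun v hv => ?_⟩
  obtain ⟨a, -, rfl⟩ := List.mem_map.1 ((Walk.support_map _ _) ▸ hv)
  exact Set.disjoint_left.1 hSC a.2

theorem IsInducedCycle.subset_interiorOf (hS : IsInducedCycle G S) (hSC : Disjoint S C)
    (hz : z ∈ S) (hzC : z ∈ interiorOf G C) : S ⊆ interiorOf G C :=
  fun _ hy => mem_interiorOf_of_reachAvoiding hzC (hS.reachAvoiding hSC hz hy)

theorem IsInducedCycle.exists_bool_coloring (hS : IsInducedCycle G S) (heven : Even S.ncard) :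
    ∃ f : V → Bool, ∀ x ∈ S, ∀ y ∈ S, G.Adj x y → f x ≠ f y := by
  classical
  obtain ⟨hfin, -, hdeg, hconn⟩ := hS
  have : Finite S := hfin
  set H := G.induce S
  have hdegH : ∀ s, (H.neighborSet s).ncard = 2 := by
    intro s
    rw [← hdeg s s.2, ← Set.ncard_image_of_injective _ Subtype.val_injective]
    congr 1
    ext y
    simp [H, and_comm]
  obtain ⟨s⟩ := hconn.nonempty
  obtain ⟨p, hp, -⟩ := IsCycles.exists_cycle_toSubgraph_verts_eq_connectedComponentSupp
    (c := H.connectedComponentMk s) (fun t _ => hdegH t) rfl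
    (Set.nonempty_of_ncard_ne_zero (by rw [hdegH]; norm_num))
  obtain ⟨e⟩ := (cycleGraph_isContained_iff hp.three_le_length).2 ⟨s, p, hp, rfl⟩
  have hdeg_le : ∀ i,
      (H.neighborSet (e i)).ncard ≤ ((cycleGraph p.length).neighborSet i).ncard := fun i => by
    rw [hdegH, ncard_neighborSet_cycleGraph hp.three_le_length]
  have : Nonempty (Fin p.length) := ⟨⟨0, by have := hp.three_le_length; omega⟩⟩
  -- the cycle found is Hamiltonian: a copy of `C_n` in a connected 2-regular graph is onto
  let φ := Equiv.ofBijective e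
    ⟨e.injective, e.surjective_of_ncard_neighborSet_le hconn (fun _ => Set.toFinite _) hdeg_le⟩
  have hlen : p.length = S.ncard := by
    rw [← Nat.card_coe_set_eq, ← Nat.card_fin p.length]
    exact Nat.card_congr φ
  let b := cycleGraph.bicoloring_of_even p.length (hlen ▸ heven)
  refine ⟨fun x => if hx : x ∈ S then b (φ.symm ⟨x, hx⟩) else false, ?_⟩
  intro x hx y hy hxy
  simp only [dif_pos hx, dif_pos hy]
  have hadj : H.Adj (φ (φ.symm ⟨x, hx⟩)) ⟨y, hy⟩ := by rwa [φ.apply_symm_apply]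
  obtain ⟨j, hij, hj⟩ := e.exists_adj_eq_of_ncard_neighborSet_le (Set.toFinite _)
    (hdeg_le _) hadj
  rw [← hj, show e j = φ j from rfl, φ.symm_apply_apply]
  exact b.valid hij

end Cycles

section Blocks

variable {G : SimpleGraph V} {lamC : ι → Set V} {par : ι → ι} {S T : Set V} {u v w : ι}
  {x y z : V}

theorem wellFounded_child (htree₁ : ∀ v : ι, {w | ∃ n : ℕ, par^[n] w = v}.Finite)
    (htree₂ : ∀ (v : ι) (n : ℕ), par^[n + 1] v ≠ v) :
    WellFounded fun u v : ι => par u = v ∧ u ≠ v := by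
  refine Subrelation.wf (r := InvImage (· < ·) fun v => (htree₁ v).toFinset.card) ?_
    (InvImage.wf _ wellFounded_lt)
  rintro u v ⟨rfl, -⟩
  apply Finset.card_lt_card
  rw [Set.Finite.toFinset_ssubset_toFinset]
  refine ⟨fun w ⟨n, hn⟩ => ⟨n + 1, by rw [Function.iterate_succ_apply', hn]⟩,
    fun hsub => ?_⟩
  obtain ⟨n, hn⟩ := hsub (⟨0, rfl⟩ : ∃ n, par^[n] (par u) = par u)
  exact htree₂ u n (by rwa [Function.iterate_succ_apply])

theorem mem_ordinaryOf_or_exists_child (hx : x ∈ interiorOf G (lamC v)) :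
    x ∈ ordinaryOf G lamC par v ∨
      ∃ u, (par u = v ∧ u ≠ v) ∧ x ∈ blockOf G lamC u := by
  by_cases hxo : x ∈ ordinaryOf G lamC par v
  · exact .inl hxo
  · simp only [ordinaryOf, Set.mem_sdiff, hx, true_and, not_not, Set.mem_union, Set.mem_iUnion,
      Set.mem_ofPred_eq, exists_prop] at hxo
    exact .inr (hxo.resolve_left hx.1)

theorem finite_interiorOf (hwf : WellFounded fun u v : ι => par u = v ∧ u ≠ v)
    (hchild : ∀ v, {w | par w = v ∧ w ≠ v}.Finite) (hcyc : ∀ v, IsInducedCycle G (lamC v))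
    (hGvfin : ∀ v, (contrVerts G lamC par v).Finite) (v : ι) :
    (interiorOf G (lamC v)).Finite := by
  induction v using hwf.induction with
  | _ v ih =>
  have hord : (ordinaryOf G lamC par v).Finite :=
    ((hGvfin v).subset fun _ h => .inl (.inl h)).of_finite_image Sum.inl_injective.injOn
  refine (hord.union ((hchild v).biUnion fun u hu => (hcyc u).1.union (ih u hu))).subset
    fun x hx => ?_
  rcases mem_ordinaryOf_or_exists_child hx with hxo | ⟨u, hu, hxu⟩
  · exact .inl hxo
  · exact .inr (Set.mem_biUnion hu hxu)

theorem mem_blockOf_of_adj (hx : x ∈ interiorOf G (lamC u)) (hxy : G.Adj x y) :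
    y ∈ blockOf G lamC u := by
  by_cases hy : y ∈ lamC u
  · exact .inl hy
  · exact .inr (mem_interiorOf_of_adj hx hxy hy)

theorem mem_blockOf_of_finite_supp (hx : (G.connectedComponentMk x).supp.Finite) :
    x ∈ blockOf G lamC v := by
  by_cases hxv : x ∈ lamC v
  · exact .inl hxv
  · exact .inr (mem_interiorOf_of_finite_supp hxv hx)

theorem blockOf_subset_blockOf (hu : (lamC u).Finite) (huw : lamC u ⊆ interiorOf G (lamC w)) :
    blockOf G lamC u ⊆ blockOf G lamC w := by
  rintro x (hx | hx)
  · exact .inr (huw hx)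
  · by_cases hxw : x ∈ lamC w
    · exact .inl hxw
    · exact .inr (mem_interiorOf_of_mem_interiorOf hu huw hx hxw)

theorem finite_supp_of_subset_interiorOf (hu : (blockOf G lamC u).Finite)
    (hw : (blockOf G lamC w).Finite) (huw : lamC u ⊆ interiorOf G (lamC w))
    (hwu : lamC w ⊆ interiorOf G (lamC u)) (hz : z ∈ blockOf G lamC u) :
    (G.connectedComponentMk z).supp.Finite := by
  refine (hu.union hw).subset fun y hy => ?_
  refine (ConnectedComponent.eq.1 hy).symm.mem_of_forall_adj_mem ?_ (.inl hz)
  rintro a ((ha | ha) | (ha | ha)) b hab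
  · exact .inr (mem_blockOf_of_adj (huw ha) hab)
  · exact .inl (mem_blockOf_of_adj ha hab)
  · exact .inl (mem_blockOf_of_adj (hwu ha) hab)
  · exact .inr (mem_blockOf_of_adj ha hab)

/-- Otherwise the component of `z` is trapped inside both cycles. -/
theorem IsInducedCycle.subset_interiorOf_or (hS : IsInducedCycle G S) (hT : IsInducedCycle G T)
    (hST : Disjoint S T) (hzS : z ∈ S ∪ interiorOf G S) (hzT : z ∈ T ∪ interiorOf G T)
    (hinf : (G.connectedComponentMk z).supp.Infinite) :
    S ⊆ interiorOf G T ∨ T ⊆ interiorOf G S := by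
  rcases hzS with hzS | hzS <;> rcases hzT with hzT | hzT
  · exact absurd hzT (Set.disjoint_left.1 hST hzS)
  · exact .inl (hS.subset_interiorOf hST hzS hzT)
  · exact .inr (hT.subset_interiorOf hST.symm hzT hzS)
  by_cases hTS : ∃ c ∈ T, ReachAvoiding G S z c
  · obtain ⟨c, hc, hzc⟩ := hTS
    exact .inr (hT.subset_interiorOf hST.symm hc (mem_interiorOf_of_reachAvoiding hzS hzc))
  by_cases hST' : ∃ c ∈ S, ReachAvoiding G T z c
  · obtain ⟨c, hc, hzc⟩ := hST'
    exact .inl (hS.subset_interiorOf hST hc (mem_interiorOf_of_reachAvoiding hzT hzc))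
  refine absurd (hzS.2.subset fun y hy => ?_) hinf
  refine (reachAvoiding_of_reachable (C := S ∪ T) (by simp [hzS.1, hzT.1]) ?_
    (ConnectedComponent.eq.1 hy).symm).mono Set.subset_union_left
  rintro r c hr hrc (hc | hc)
  · exact hST' ⟨c, hc, (hr.mono Set.subset_union_right).adj hrc (Set.disjoint_left.1 hST hc)⟩
  · exact hTS ⟨c, hc, (hr.mono Set.subset_union_left).adj hrc (Set.disjoint_right.1 hST hc)⟩

theorem blockOf_subset_or_subset (hcyc : ∀ v, IsInducedCycle G (lamC v))
    (hfar : ∀ v w, v ≠ w → FarApart G (lamC v) (lamC w) 2) (huw : u ≠ w)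
    (hzu : z ∈ blockOf G lamC u) (hzw : z ∈ blockOf G lamC w)
    (hinf : (G.connectedComponentMk z).supp.Infinite) :
    blockOf G lamC u ⊆ blockOf G lamC w ∨ blockOf G lamC w ⊆ blockOf G lamC u :=
  ((hcyc u).subset_interiorOf_or (hcyc w) ((hfar u w huw).disjoint (by norm_num)) hzu hzw
    hinf).imp (blockOf_subset_blockOf (hcyc u).1) (blockOf_subset_blockOf (hcyc w).1)

/-- Either a walk from `x` avoiding all cycles reaches some `λ(u)`, which lies inside `λ(par u)`,
or the component of `x` avoids all cycles and is finite, hence inside every cycle. -/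
theorem exists_mem_blockOf [Nonempty ι] (hnest : ∀ w, lamC w ⊆ interiorOf G (lamC (par w)))
    (hexh : ∀ x ∉ ⋃ v, lamC v, {y | ReachAvoiding G (⋃ v, lamC v) x y}.Finite) (x : V) :
    ∃ v, x ∈ blockOf G lamC v := by
  by_cases hx : ∃ v, x ∈ lamC v
  · obtain ⟨v, hv⟩ := hx
    exact ⟨v, .inl hv⟩
  have hxU : x ∉ ⋃ v, lamC v := by simpa using hx
  by_cases hexit :
      ∃ r c, ReachAvoiding G (⋃ v, lamC v) x r ∧ G.Adj r c ∧ c ∈ ⋃ v, lamC v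
  · obtain ⟨r, c, hr, hrc, hc⟩ := hexit
    obtain ⟨u, hcu⟩ := Set.mem_iUnion.1 hc
    have hc' := hnest u hcu
    exact ⟨par u, .inr (mem_interiorOf_of_reachAvoiding hc'
      ((hr.mono (Set.subset_iUnion _ _)).adj hrc hc'.1).symm)⟩
  · push Not at hexit
    refine ⟨Classical.arbitrary ι, .inr ⟨fun h => hx ⟨_, h⟩, (hexh x hxU).subset ?_⟩⟩
    rintro y ⟨p, -⟩
    exact reachAvoiding_of_reachable hxU hexit ⟨p⟩

theorem eventually_mem_blockOf_iterate (hcyc : ∀ v, IsInducedCycle G (lamC v))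
    (hnest : ∀ w, lamC w ⊆ interiorOf G (lamC (par w))) (hx : x ∈ blockOf G lamC v)
    (hxz : G.Reachable x z) : ∀ᶠ k in Filter.atTop, z ∈ blockOf G lamC (par^[k] v) := by
  have hmono : Monotone fun k => blockOf G lamC (par^[k] v) :=
    monotone_nat_of_le_succ fun k => blockOf_subset_blockOf (hcyc _).1
      (by rw [Function.iterate_succ_apply']; exact hnest _)
  obtain ⟨k, hk⟩ : ∃ k, z ∈ blockOf G lamC (par^[k] v) := by
    refine hxz.mem_of_forall_adj_mem (S := {z | ∃ k, z ∈ blockOf G lamC (par^[k] v)}) ?_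
      ⟨0, hx⟩
    rintro a ⟨k, ha | ha⟩ b hab
    · exact ⟨k + 1, mem_blockOf_of_adj
        (by rw [Function.iterate_succ_apply']; exact hnest _ ha) hab⟩
    · exact ⟨k, mem_blockOf_of_adj ha hab⟩
  exact Filter.eventually_atTop.2 ⟨k, fun m hm => hmono hm hk⟩

end Blocks

section Coloring

variable {G : SimpleGraph V} {lamC : ι → Set V} {par : ι → ι} {u v : ι} {x y : V}

theorem inl_mem_contrVerts (hx : x ∈ ordinaryOf G lamC par v) :
    Sum.inl x ∈ contrVerts G lamC par v :=
  .inl (.inl ⟨x, hx, rfl⟩)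

theorem inr_mem_contrVerts (hu : par u = v ∧ u ≠ v) : Sum.inr u ∈ contrVerts G lamC par v :=
  .inr ⟨u, hu, rfl⟩

def IsContrColoring (G : SimpleGraph V) (lamC : ι → Set V) (par : ι → ι) (v : ι)
    (γ : V ⊕ ι → Fin 4) : Prop :=
  ∀ a ∈ contrVerts G lamC par v, ∀ b ∈ contrVerts G lamC par v, a ≠ b →
    contrRel G lamC par v a b → γ a ≠ γ b

theorem exists_isContrColoring (γ : (contrGraph G lamC par v).Coloring (Fin 4)) (α : Fin 4) :
    ∃ γ' : V ⊕ ι → Fin 4, γ' (.inr v) = α ∧ IsContrColoring G lamC par v γ' := by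
  classical
  have hv : Sum.inr v ∈ contrVerts G lamC par v := .inl (.inr rfl)
  let σ := Equiv.swap (γ ⟨.inr v, hv⟩) α
  refine ⟨fun a => if ha : a ∈ contrVerts G lamC par v then σ (γ ⟨a, ha⟩) else 0,
    ?_, ?_⟩
  · simp [hv, σ]
  · intro a ha b hb hab hrel
    simp only [dif_pos ha, dif_pos hb, σ.injective.ne_iff]
    exact γ.valid ((SimpleGraph.fromRel_adj _ _ _).2 ⟨hab, .inl hrel⟩)

theorem mem_cycle_of_mem_ordinaryOf_of_adj (hx : x ∈ ordinaryOf G lamC par v)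
    (hu : par u = v ∧ u ≠ v) (hy : y ∈ blockOf G lamC u) (hxy : G.Adj x y) :
    y ∈ lamC u := by
  have hxu : x ∉ blockOf G lamC u := fun h => hx.2 (.inr (Set.mem_biUnion hu h))
  refine hy.resolve_right fun hyu => hxu ?_
  exact mem_blockOf_of_adj hyu hxy.symm

open Classical in
noncomputable def blockColoring (G : SimpleGraph V) (lamC : ι → Set V) (par : ι → ι) (v : ι)
    (γ : V ⊕ ι → Fin 4) (f : V → Bool) (d : V → Fin 5) (x : V) : Fin 5 :=
  if x ∈ lamC v then (if f x then Fin.last 4 else (γ (.inr v)).castSucc)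
  else if x ∈ ordinaryOf G lamC par v then (γ (.inl x)).castSucc
  else d x

variable {γ : V ⊕ ι → Fin 4} {f : V → Bool} {d : V → Fin 5}

theorem blockColoring_of_mem_cycle (hx : x ∈ lamC v) :
    blockColoring G lamC par v γ f d x = if f x then Fin.last 4 else (γ (.inr v)).castSucc := by
  simp [blockColoring, hx]

theorem blockColoring_of_mem_ordinaryOf (hx : x ∈ ordinaryOf G lamC par v) :
    blockColoring G lamC par v γ f d x = (γ (.inl x)).castSucc := by
  simp [blockColoring, hx, hx.1.1]

theorem blockColoring_of_notMem (hx : x ∉ lamC v ∪ ordinaryOf G lamC par v) :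
    blockColoring G lamC par v γ f d x = d x := by
  simp_all [blockColoring]

theorem blockColoring_ne_of_mem_cycle_of_mem_ordinaryOf
    (hγ : IsContrColoring G lamC par v γ)
    (hx : x ∈ lamC v) (hy : y ∈ ordinaryOf G lamC par v) (hxy : G.Adj x y) :
    blockColoring G lamC par v γ f d x ≠ blockColoring G lamC par v γ f d y := by
  rw [blockColoring_of_mem_cycle hx, blockColoring_of_mem_ordinaryOf hy]
  split_ifs
  · exact (Fin.castSucc_ne_last _).symm
  · exact Fin.castSucc_injective _ |>.ne (hγ _ (.inl (.inr rfl)) _ (inl_mem_contrVerts hy)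
      Sum.inr_ne_inl (.inl ⟨rfl, x, hx, hxy.symm⟩))

theorem blockColoring_ne_of_mem_core
    (hγ : IsContrColoring G lamC par v γ)
    (hf : ∀ x ∈ lamC v, ∀ y ∈ lamC v, G.Adj x y → f x ≠ f y)
    (hx : x ∈ lamC v ∪ ordinaryOf G lamC par v) (hy : y ∈ lamC v ∪ ordinaryOf G lamC par v)
    (hxy : G.Adj x y) :
    blockColoring G lamC par v γ f d x ≠ blockColoring G lamC par v γ f d y := by
  rcases hx with hx | hx <;> rcases hy with hy | hy
  · rw [blockColoring_of_mem_cycle hx, blockColoring_of_mem_cycle hy]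
    have hfxy := hf x hx y hy hxy
    revert hfxy
    cases f x <;> cases f y <;> simp [Fin.ext_iff] <;> omega
  · exact blockColoring_ne_of_mem_cycle_of_mem_ordinaryOf hγ hx hy hxy
  · exact (blockColoring_ne_of_mem_cycle_of_mem_ordinaryOf hγ hy hx hxy.symm).symm
  · rw [blockColoring_of_mem_ordinaryOf hx, blockColoring_of_mem_ordinaryOf hy]
    exact Fin.castSucc_injective _ |>.ne (hγ _ (inl_mem_contrVerts hx) _ (inl_mem_contrVerts hy)
      (Sum.inl_injective.ne hxy.ne) hxy)

end Coloring

section Induction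

variable {G : SimpleGraph V} {lamC : ι → Set V} {par : ι → ι} {u v w : ι} {x y : V}

structure IsBlockColoring (G : SimpleGraph V) (lamC : ι → Set V) (v : ι) (α : Fin 4)
    (c : V → Fin 5) : Prop where
  ne_of_adj : ∀ x ∈ blockOf G lamC v, ∀ y ∈ blockOf G lamC v, G.Adj x y →
    (G.connectedComponentMk x).supp.Infinite → c x ≠ c y
  mem_cycle : ∀ x ∈ lamC v, c x = α.castSucc ∨ c x = Fin.last 4

def IsOuterChild (G : SimpleGraph V) (lamC : ι → Set V) (par : ι → ι) (v : ι) (x : V)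
    (u : ι) : Prop :=
  (par u = v ∧ u ≠ v) ∧ x ∈ blockOf G lamC u ∧
    ∀ w, par w = v ∧ w ≠ v → x ∈ blockOf G lamC w →
      blockOf G lamC w ⊆ blockOf G lamC u

theorem exists_isOuterChild (hchild : {w | par w = v ∧ w ≠ v}.Finite)
    (hcyc : ∀ v, IsInducedCycle G (lamC v))
    (hfar : ∀ v w, v ≠ w → FarApart G (lamC v) (lamC w) 2)
    (hx : x ∈ interiorOf G (lamC v)) (hxo : x ∉ ordinaryOf G lamC par v)
    (hinf : (G.connectedComponentMk x).supp.Infinite) : ∃ u, IsOuterChild G lamC par v x u := by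
  obtain ⟨u₀, hu₀⟩ := (mem_ordinaryOf_or_exists_child hx).resolve_left hxo
  obtain ⟨u, ⟨hu, hxu⟩, hmax⟩ :=
    (hchild.subset fun w (hw : _ ∧ _) => hw.1).exists_maximalFor
      (blockOf G lamC) {w | (par w = v ∧ w ≠ v) ∧ x ∈ blockOf G lamC w} ⟨u₀, hu₀⟩
  refine ⟨u, hu, hxu, fun w hw hxw => ?_⟩
  obtain rfl | hwu := eq_or_ne w u
  · exact subset_rfl
  · exact (blockOf_subset_or_subset hcyc hfar hwu hxw hxu hinf).elim id (hmax ⟨hw, hxw⟩)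

theorem IsOuterChild.eq_of_adj (hfar : ∀ v w, v ≠ w → FarApart G (lamC v) (lamC w) 2)
    (hblock : ∀ v, (blockOf G lamC v).Finite) (hu : IsOuterChild G lamC par v x u)
    (hw : IsOuterChild G lamC par v y w) (hxy : G.Adj x y)
    (hinf : (G.connectedComponentMk x).supp.Infinite) : u = w := by
  by_contra huw
  have hdisj := (hfar u w huw).disjoint (by norm_num)
  have hmeet : y ∈ blockOf G lamC u ∨ x ∈ blockOf G lamC w := by
    rcases hu.2.1 with hxu | hxu
    · rcases hw.2.1 with hyw | hyw
      · exact absurd hxy ((hfar u w huw).not_adj (by norm_num) hxu hyw)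
      · exact .inr (mem_blockOf_of_adj hyw hxy.symm)
    · exact .inl (mem_blockOf_of_adj hxu hxy)
  have heq : blockOf G lamC u = blockOf G lamC w := by
    rcases hmeet with h | h
    · exact (hw.2.2 u hu.1 h).antisymm (hu.2.2 w hw.1 (hw.2.2 u hu.1 h hu.2.1))
    · exact (hw.2.2 u hu.1 (hu.2.2 w hw.1 h hw.2.1)).antisymm (hu.2.2 w hw.1 h)
  have huw' : lamC u ⊆ interiorOf G (lamC w) := fun p hp => by
    have : p ∈ blockOf G lamC w := heq ▸ .inl hp
    exact this.resolve_left (Set.disjoint_left.1 hdisj hp)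
  have hwu' : lamC w ⊆ interiorOf G (lamC u) := fun p hp => by
    have : p ∈ blockOf G lamC u := heq.symm ▸ .inl hp
    exact this.resolve_left (Set.disjoint_right.1 hdisj hp)
  exact hinf (finite_supp_of_subset_interiorOf (hblock u) (hblock w) huw' hwu' hu.2.1)

theorem not_adj_of_mem_cycle_of_mem_blockOf_child (hcyc : ∀ v, IsInducedCycle G (lamC v))
    (hfar : ∀ v w, v ≠ w → FarApart G (lamC v) (lamC w) 2)
    (hnest : ∀ w, lamC w ⊆ interiorOf G (lamC (par w)))
    (hblock : ∀ v, (blockOf G lamC v).Finite) (hx : x ∈ lamC v) (hu : par u = v ∧ u ≠ v)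
    (hy : y ∈ blockOf G lamC u) (hinf : (G.connectedComponentMk y).supp.Infinite) :
    ¬ G.Adj x y := by
  intro hxy
  have hdisj := (hfar v u hu.2.symm).disjoint (by norm_num)
  rcases hy with hy | hy
  · exact (hfar v u hu.2.symm).not_adj (by norm_num) hx hy hxy
  have hxu : x ∈ interiorOf G (lamC u) :=
    (mem_blockOf_of_adj hy hxy.symm).resolve_left (Set.disjoint_left.1 hdisj hx)
  have hvu := (hcyc v).subset_interiorOf hdisj hx hxu
  have huv : lamC u ⊆ interiorOf G (lamC v) := hu.1 ▸ hnest u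
  exact hinf (finite_supp_of_subset_interiorOf (hblock u) (hblock v) huv hvu (.inr hy))

theorem blockColoring_ne_of_isOuterChild (hcyc : ∀ v, IsInducedCycle G (lamC v))
    (hfar : ∀ v w, v ≠ w → FarApart G (lamC v) (lamC w) 2)
    (hnest : ∀ w, lamC w ⊆ interiorOf G (lamC (par w)))
    (hblock : ∀ v, (blockOf G lamC v).Finite) {γ : V ⊕ ι → Fin 4} {f : V → Bool}
    {d : V → Fin 5} (hγ : IsContrColoring G lamC par v γ)
    (hx : x ∈ lamC v ∪ ordinaryOf G lamC par v) (hu : IsOuterChild G lamC par v y u)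
    (hy : y ∉ lamC v ∪ ordinaryOf G lamC par v)
    (hd : y ∈ lamC u → d y = (γ (.inr u)).castSucc ∨ d y = Fin.last 4) (hxy : G.Adj x y)
    (hinf : (G.connectedComponentMk y).supp.Infinite) :
    blockColoring G lamC par v γ f d x ≠ blockColoring G lamC par v γ f d y := by
  rcases hx with hx | hx
  · exact absurd hxy
      (not_adj_of_mem_cycle_of_mem_blockOf_child hcyc hfar hnest hblock hx hu.1 hu.2.1 hinf)
  have hyu := mem_cycle_of_mem_ordinaryOf_of_adj hx hu.1 hu.2.1 hxy
  rw [blockColoring_of_mem_ordinaryOf hx, blockColoring_of_notMem hy]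
  rcases hd hyu with hd | hd <;> rw [hd]
  · exact Fin.castSucc_injective _ |>.ne (hγ _ (inl_mem_contrVerts hx) _
      (inr_mem_contrVerts hu.1) Sum.inl_ne_inr (.inr ⟨hu.1.1, hu.1.2, y, .inl hyu, hxy⟩))
  · exact Fin.castSucc_ne_last _

theorem isBlockColoring_blockColoring (hcyc : ∀ v, IsInducedCycle G (lamC v))
    (hfar : ∀ v w, v ≠ w → FarApart G (lamC v) (lamC w) 2)
    (hnest : ∀ w, lamC w ⊆ interiorOf G (lamC (par w)))
    (hblock : ∀ v, (blockOf G lamC v).Finite) {γ : V ⊕ ι → Fin 4} {α : Fin 4}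
    (hγv : γ (.inr v) = α) (hγ : IsContrColoring G lamC par v γ) {f : V → Bool}
    (hf : ∀ x ∈ lamC v, ∀ y ∈ lamC v, G.Adj x y → f x ≠ f y)
    {cc : ι → Fin 4 → V → Fin 5}
    (hcc : ∀ u α', par u = v ∧ u ≠ v → IsBlockColoring G lamC u α' (cc u α'))
    {outer : V → ι} (houter : ∀ x ∈ interiorOf G (lamC v), x ∉ ordinaryOf G lamC par v →
      (G.connectedComponentMk x).supp.Infinite → IsOuterChild G lamC par v x (outer x)) :
    IsBlockColoring G lamC v α
      (blockColoring G lamC par v γ f fun x => cc (outer x) (γ (.inr (outer x))) x) := by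
  have hdeep : ∀ x ∈ blockOf G lamC v, x ∉ lamC v ∪ ordinaryOf G lamC par v →
      (G.connectedComponentMk x).supp.Infinite → IsOuterChild G lamC par v x (outer x) :=
    fun x hx hxK => houter x (hx.resolve_left fun h => hxK (.inl h)) fun h => hxK (.inr h)
  refine ⟨fun x hx y hy hxy hinf => ?_, fun x hx => ?_⟩
  · have hinf' : (G.connectedComponentMk y).supp.Infinite :=
      ConnectedComponent.eq.2 hxy.reachable ▸ hinf
    by_cases hxK : x ∈ lamC v ∪ ordinaryOf G lamC par v <;>
      by_cases hyK : y ∈ lamC v ∪ ordinaryOf G lamC par v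
    · exact blockColoring_ne_of_mem_core hγ hf hxK hyK hxy
    · have hyu := hdeep y hy hyK hinf'
      exact blockColoring_ne_of_isOuterChild hcyc hfar hnest hblock hγ hxK hyu hyK
        ((hcc _ _ hyu.1).mem_cycle y) hxy hinf'
    · have hxu := hdeep x hx hxK hinf
      exact Ne.symm <| blockColoring_ne_of_isOuterChild hcyc hfar hnest hblock hγ hyK hxu hxK
        ((hcc _ _ hxu.1).mem_cycle x) hxy.symm hinf
    · have hxu := hdeep x hx hxK hinf
      have hyu := hdeep y hy hyK hinf'
      have heq := hxu.eq_of_adj hfar hblock hyu hxy hinf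
      rw [blockColoring_of_notMem hxK, blockColoring_of_notMem hyK, ← heq]
      exact (hcc _ _ hxu.1).ne_of_adj x hxu.2.1 y (heq ▸ hyu.2.1) hxy hinf
  · rw [blockColoring_of_mem_cycle hx, hγv]
    split_ifs <;> simp

theorem exists_isBlockColoring (hwf : WellFounded fun u v : ι => par u = v ∧ u ≠ v)
    (hchild : ∀ v, {w | par w = v ∧ w ≠ v}.Finite) (hcyc : ∀ v, IsInducedCycle G (lamC v))
    (heven : ∀ v, Even (lamC v).ncard)
    (hfar : ∀ v w, v ≠ w → FarApart G (lamC v) (lamC w) 2)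
    (hnest : ∀ w, lamC w ⊆ interiorOf G (lamC (par w)))
    (hblock : ∀ v, (blockOf G lamC v).Finite)
    (h4col : ∀ v, Nonempty ((contrGraph G lamC par v).Coloring (Fin 4))) (v : ι) (α : Fin 4) :
    ∃ c, IsBlockColoring G lamC v α c := by
  induction v using hwf.induction generalizing α with
  | _ v ih =>
  obtain ⟨γ, hγv, hγ⟩ := exists_isContrColoring (h4col v).some α
  obtain ⟨f, hf⟩ := (hcyc v).exists_bool_coloring (heven v)
  choose cc hcc using fun u α' =>
    (em (par u = v ∧ u ≠ v)).elim (fun hu => (ih u hu α').imp fun _ h _ => h)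
      fun hu => ⟨0, fun h => absurd h hu⟩
  choose outer houter using fun x =>
    (em (x ∈ interiorOf G (lamC v) ∧ x ∉ ordinaryOf G lamC par v ∧
      (G.connectedComponentMk x).supp.Infinite)).elim
      (fun hx => (exists_isOuterChild (hchild v) hcyc hfar hx.1 hx.2.1 hx.2.2).imp
        fun _ h _ => h)
      fun hx => ⟨v, fun h => absurd h hx⟩
  exact ⟨_, isBlockColoring_blockColoring hcyc hfar hnest hblock hγv hγ hf hcc
    fun x hx hxo hinf => houter x ⟨hx, hxo, hinf⟩⟩

theorem exists_coloring_blockOf_of_forall_not_child (hcyc : ∀ v, IsInducedCycle G (lamC v))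
    (heven : ∀ v, Even (lamC v).ncard)
    (h4col : ∀ v, Nonempty ((contrGraph G lamC par v).Coloring (Fin 4)))
    (hv : ∀ u, ¬ (par u = v ∧ u ≠ v)) :
    ∃ c : V → Fin 5,
      ∀ x ∈ blockOf G lamC v, ∀ y ∈ blockOf G lamC v, G.Adj x y → c x ≠ c y := by
  obtain ⟨γ, -, hγ⟩ := exists_isContrColoring (h4col v).some 0
  obtain ⟨f, hf⟩ := (hcyc v).exists_bool_coloring (heven v)
  have hK : blockOf G lamC v ⊆ lamC v ∪ ordinaryOf G lamC par v := by
    rintro x (hx | hx)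
    · exact .inl hx
    · exact .inr ((mem_ordinaryOf_or_exists_child hx).resolve_right fun ⟨u, hu, _⟩ => hv u hu)
  exact ⟨blockColoring G lamC par v γ f 0, fun x hx y hy =>
    blockColoring_ne_of_mem_core hγ hf (hK hx) (hK hy)⟩

end Induction

section Assembly

variable {G : SimpleGraph V} {lamC : ι → Set V} {par : ι → ι}

theorem exists_forall_mem_supp_eventually_mem_blockOf [Nonempty ι]
    (hcyc : ∀ v, IsInducedCycle G (lamC v))
    (hnest : ∀ w, lamC w ⊆ interiorOf G (lamC (par w)))
    (hexh : ∀ x ∉ ⋃ v, lamC v, {y | ReachAvoiding G (⋃ v, lamC v) x y}.Finite)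
    (K : G.ConnectedComponent) :
    ∃ v, ∀ z ∈ K.supp, ∀ᶠ k in Filter.atTop, z ∈ blockOf G lamC (par^[k] v) := by
  induction K using ConnectedComponent.ind with
  | h x =>
  obtain ⟨v, hv⟩ := exists_mem_blockOf hnest hexh x
  exact ⟨v, fun z hz => eventually_mem_blockOf_iterate hcyc hnest hv
    (ConnectedComponent.eq.1 hz).symm⟩

/-- Finite components lie in every block, so `cfin` colours them; each infinite component is
coloured by a limit of the colourings `cinf` of the blocks along a ray of `T`. -/
theorem nonempty_coloring_of_isBlockColoring [Nonempty ι]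
    (hcyc : ∀ v, IsInducedCycle G (lamC v))
    (hnest : ∀ w, lamC w ⊆ interiorOf G (lamC (par w)))
    (hexh : ∀ x ∉ ⋃ v, lamC v, {y | ReachAvoiding G (⋃ v, lamC v) x y}.Finite)
    {t : ι} {cfin : V → Fin 5}
    (hcfin :
      ∀ x ∈ blockOf G lamC t, ∀ y ∈ blockOf G lamC t, G.Adj x y → cfin x ≠ cfin y)
    {cinf : ι → V → Fin 5} (hcinf : ∀ v, IsBlockColoring G lamC v 0 (cinf v)) :
    Nonempty (G.Coloring (Fin 5)) := by
  classical
  choose base hbase using exists_forall_mem_supp_eventually_mem_blockOf hcyc hnest hexh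
  refine nonempty_coloring_of_eventually_ne (fun k z =>
    if (G.connectedComponentMk z).supp.Finite then cfin z
    else cinf (par^[k] (base (G.connectedComponentMk z))) z) fun x y hxy => ?_
  have hK : G.connectedComponentMk x = G.connectedComponentMk y :=
    ConnectedComponent.eq.2 hxy.reachable
  by_cases hfin : (G.connectedComponentMk x).supp.Finite
  · refine Filter.Eventually.of_forall fun k => ?_
    simp only [if_pos hfin, if_pos (hK ▸ hfin)]
    exact hcfin x (mem_blockOf_of_finite_supp hfin) y
      (mem_blockOf_of_finite_supp (hK ▸ hfin)) hxy
  · filter_upwards [hbase _ x rfl, hbase _ y hK.symm] with k hkx hky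
    simp only [if_neg hfin, ← hK]
    exact (hcinf _).ne_of_adj x hkx y hky hxy hfin

end Assembly

/-- Let `(T, λ)` be an even cycle exhaustion of `G` with corridors of width 4: `T` is a
one-ended tree given by the parent map `par` (every vertex has finitely many descendants
and no `par`-cycles), each `λ(v)` is a non-selftouching cycle of even length, the cycles
are pairwise at graph distance at least 4, `λ(w) ⊆ int(λ(par w))`, and the complement of
the union of the cycles has only finite components.  If every contracted graph `G_v` is
properly 4-colorable, then `G` admits a proper 5-coloring. -/
theorem stmt_10 (G : SimpleGraph V) (lamC : ι → Set V) (par : ι → ι) [Infinite ι]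
    (htree₁ : ∀ v : ι, {w | ∃ n : ℕ, par^[n] w = v}.Finite)
    (htree₂ : ∀ (v : ι) (n : ℕ), par^[n + 1] v ≠ v)
    (hcyc : ∀ v, IsInducedCycle G (lamC v))
    (heven : ∀ v, Even (lamC v).ncard)
    (hfar : ∀ v w, v ≠ w → FarApart G (lamC v) (lamC w) 4)
    (hnest : ∀ w, lamC w ⊆ interiorOf G (lamC (par w)))
    (hexh : ∀ x ∉ ⋃ v, lamC v,
      {y | ReachAvoiding G (⋃ v, lamC v) x y}.Finite)
    (hGvfin : ∀ v, (contrVerts G lamC par v).Finite)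
    (h4col : ∀ v, Nonempty ((contrGraph G lamC par v).Coloring (Fin 4))) :
    ∃ c : V → Fin 5, ∀ x y, G.Adj x y → c x ≠ c y := by
  have hwf := wellFounded_child htree₁ htree₂
  have hfar₂ := fun v w hvw => (hfar v w hvw).mono (by norm_num : 2 ≤ 4)
  have hchild : ∀ v, {w | par w = v ∧ w ≠ v}.Finite := fun v =>
    (htree₁ v).subset fun w hw => ⟨1, hw.1⟩
  have hblock : ∀ v, (blockOf G lamC v).Finite := fun v =>
    (hcyc v).1.union (finite_interiorOf hwf hchild hcyc hGvfin v)
  obtain ⟨t, -, ht⟩ := hwf.has_min Set.univ Set.univ_nonempty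
  obtain ⟨cfin, hcfin⟩ :=
    exists_coloring_blockOf_of_forall_not_child hcyc heven h4col fun u => ht u trivial
  choose cinf hcinf using fun v =>
    exists_isBlockColoring hwf hchild hcyc heven hfar₂ hnest hblock h4col v 0
  obtain ⟨col⟩ := nonempty_coloring_of_isBlockColoring hcyc hnest hexh hcfin hcinf
  exact ⟨col, fun x y hxy => col.valid hxy⟩
end
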